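/- Suppose Assumption A2 holds, let τ ∈ (0,1), and let b and σ be continuous. Fix x ∈ ℝ^d and let Y : ℝ^m → ℝ^d be a measurable map such that for every w ∈ ℝ^m, Y(w) = x + (τ/2) b(x) + (τ/2) b(Y(w)) + σ(x)w. Then ∫ V_{1/2}(Y(w)) γ_τ(dw) ≤ V_{1/2}(x) + L₂τ − L₃τ|x|², where the integral of the nonnegative integrand is taken as a Lebesgue (upper) integral. -/

import Mathlib

open MeasureTheory Filter
local notation "⟪" x ", " y "⟫" => @inner ℝ _ _ x y

/-- Squared Frobenius (Hilbert–Schmidt) norm of a real `d × m` matrix. -/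
noncomputable def frobSq {d m : ℕ} (M : Matrix (Fin d) (Fin m) ℝ) : ℝ :=
  ∑ i, ∑ j, (M i j) ^ 2

/-- Matrix-vector multiplication landing in Euclidean space. -/
noncomputable def mulVecE {d m : ℕ} (M : Matrix (Fin d) (Fin m) ℝ) (w : Fin m → ℝ) :
    EuclideanSpace ℝ (Fin d) :=
  WithLp.toLp 2 (fun i => ∑ j, M i j * w j)

/-- The Gaussian measure on `ℝ^m` with i.i.d. centered coordinates of variance `τ`. -/
noncomputable def gaussM (m : ℕ) (τ : ℝ) : Measure (Fin m → ℝ) :=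
  Measure.pi fun _ => ProbabilityTheory.gaussianReal 0 τ.toNNReal

/-- The Lyapunov function `V_{1/2}(x) = |x - (τ/2) b(x)|² + 1` for the trapezoid scheme. -/
noncomputable def Vhalf {d : ℕ}
    (b : EuclideanSpace ℝ (Fin d) → EuclideanSpace ℝ (Fin d))
    (τ : ℝ) (z : EuclideanSpace ℝ (Fin d)) : ℝ :=
  ‖z - (τ / 2) • b z‖ ^ 2 + 1


open MeasureTheory Real ProbabilityTheory
open scoped NNReal ENNReal


lemma integral_sq_exp_full {b : ℝ} (hb : 0 < b) :
    ∫ x : ℝ, x ^ 2 * Real.exp (-b * x ^ 2) = Real.sqrt π / 2 * b ^ (-(3:ℝ)/2) := by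
  have h1 : ∀ x : ℝ, x ^ 2 * Real.exp (-b * x ^ 2) =
      (fun t => t ^ 2 * Real.exp (-b * t ^ 2)) |x| := by
    intro x; simp [sq_abs]
  rw [show (fun x : ℝ => x ^ 2 * Real.exp (-b * x ^ 2)) =
      (fun x : ℝ => (fun t => t ^ 2 * Real.exp (-b * t ^ 2)) |x|) from funext h1,
    integral_comp_abs (f := fun t => t ^ 2 * Real.exp (-b * t ^ 2))]
  have h2 : ∫ x in Set.Ioi (0:ℝ), x ^ 2 * Real.exp (-b * x ^ 2)
      = b ^ (-(2 + 1) / 2 : ℝ) * (1 / 2) * Real.Gamma ((2 + 1) / 2) := by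
    rw [← integral_rpow_mul_exp_neg_mul_rpow (by norm_num : (0:ℝ) < 2)
      (by norm_num : (-1:ℝ) < 2) hb]
    refine setIntegral_congr_fun measurableSet_Ioi fun x hx => ?_
    rw [show ((2:ℝ)) = ((2:ℕ):ℝ) by norm_num]
    norm_cast
  rw [h2]
  have h3 : Real.Gamma ((2 + 1) / 2) = (1/2) * Real.sqrt π := by
    rw [show ((2:ℝ) + 1) / 2 = 1/2 + 1 by norm_num, Real.Gamma_add_one (by norm_num),
      Real.Gamma_one_half_eq]
  rw [h3]
  ring_nf


lemma integrable_dirac'' {f : ℝ → ℝ} (hf : Measurable f) (a : ℝ) :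
    Integrable f (Measure.dirac a) := by
  refine ⟨hf.aestronglyMeasurable, ?_⟩
  rw [HasFiniteIntegral, lintegral_dirac' a (by measurability)]
  exact ENNReal.coe_lt_top

lemma gaussianPDFReal_eq (v : ℝ≥0) (t : ℝ) :
    gaussianPDFReal 0 v t = (√(2 * π * v))⁻¹ * rexp (-(2 * (v:ℝ))⁻¹ * t ^ 2) := by
  unfold gaussianPDFReal
  rw [sub_zero, show -t^2/(2*(v:ℝ)) = -(2*(v:ℝ))⁻¹ * t^2 by ring]

lemma integrable_gaussian_mono (v : ℝ≥0) (hv : v ≠ 0) {g : ℝ → ℝ} (hg : Measurable g)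
    (hgi : Integrable (fun t => g t * gaussianPDFReal 0 v t)) :
    Integrable g (gaussianReal 0 v) := by
  rw [gaussianReal_of_var_ne_zero 0 hv]
  rw [integrable_withDensity_iff (measurable_gaussianPDF 0 v)
    (Filter.Eventually.of_forall fun _ => ENNReal.ofReal_lt_top)]
  refine hgi.congr (Filter.Eventually.of_forall fun t => ?_)
  simp only [gaussianPDF_def, ENNReal.toReal_ofReal (gaussianPDFReal_nonneg 0 v t)]

lemma integral_gaussian_eq (v : ℝ≥0) (hv : v ≠ 0) (g : ℝ → ℝ) :
    ∫ t, g t ∂(gaussianReal 0 v) = ∫ t, gaussianPDFReal 0 v t * g t := by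
  rw [gaussianReal_of_var_ne_zero 0 hv]
  have : (gaussianPDF 0 v) = fun t => ((gaussianPDFReal 0 v t).toNNReal : ℝ≥0∞) := by
    ext t; rw [gaussianPDF]; rfl
  rw [this, integral_withDensity_eq_integral_smul
    ((measurable_gaussianPDFReal 0 v).real_toNNReal)]
  refine integral_congr_ae (Filter.Eventually.of_forall fun t => ?_)
  simp [NNReal.smul_def, Real.coe_toNNReal _ (gaussianPDFReal_nonneg 0 v t)]

lemma integrable_id_gaussian (v : ℝ≥0) : Integrable (fun t : ℝ => t) (gaussianReal 0 v) := by
  by_cases hv : v = 0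
  · subst hv; rw [gaussianReal_zero_var]; exact integrable_dirac'' measurable_id 0
  · have hv' : (0:ℝ) < v := NNReal.coe_pos.mpr (pos_iff_ne_zero.mpr hv)
    refine integrable_gaussian_mono v hv measurable_id ?_
    have h := (integrable_rpow_mul_exp_neg_mul_sq (b := (2*(v:ℝ))⁻¹) (by positivity)
      (s := 1) (by norm_num)).const_mul (√(2 * π * v))⁻¹
    refine h.congr (Filter.Eventually.of_forall fun t => ?_)
    simp only [gaussianPDFReal_eq v, Real.rpow_one]
    ring

lemma integrable_sq_gaussian (v : ℝ≥0) :
    Integrable (fun t : ℝ => t ^ 2) (gaussianReal 0 v) := by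
  by_cases hv : v = 0
  · subst hv; rw [gaussianReal_zero_var]
    exact integrable_dirac'' (by measurability) 0
  · have hv' : (0:ℝ) < v := NNReal.coe_pos.mpr (pos_iff_ne_zero.mpr hv)
    refine integrable_gaussian_mono v hv (by measurability) ?_
    have h := (integrable_rpow_mul_exp_neg_mul_sq (b := (2*(v:ℝ))⁻¹) (by positivity)
      (s := 2) (by norm_num)).const_mul (√(2 * π * v))⁻¹
    refine h.congr (Filter.Eventually.of_forall fun t => ?_)
    simp only [gaussianPDFReal_eq v,
      show ((2:ℝ)) = ((2:ℕ):ℝ) by norm_num, Real.rpow_natCast]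
    ring

lemma integral_id_gaussian (v : ℝ≥0) : ∫ t, t ∂(gaussianReal 0 v) = 0 := by
  by_cases hv : v = 0
  · subst hv; rw [gaussianReal_zero_var, integral_dirac]
  · rw [integral_gaussian_eq v hv]
    have key : ∫ t : ℝ, gaussianPDFReal 0 v t * t
        = - ∫ t : ℝ, gaussianPDFReal 0 v t * t := by
      nth_rewrite 1 [← MeasureTheory.integral_neg_eq_self
        (fun t : ℝ => gaussianPDFReal 0 v t * t)]
      rw [← integral_neg]
      refine integral_congr_ae (Filter.Eventually.of_forall fun t => ?_)
      simp only [gaussianPDFReal_eq v, neg_sq]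
      ring
    linarith

lemma integral_sq_gaussian (v : ℝ≥0) : ∫ t, t ^ 2 ∂(gaussianReal 0 v) = v := by
  by_cases hv : v = 0
  · subst hv; simp
  · have hv' : (0:ℝ) < v := NNReal.coe_pos.mpr (pos_iff_ne_zero.mpr hv)
    have hx : (0:ℝ) < 2*(v:ℝ) := by positivity
    have hb : (0:ℝ) < (2*(v:ℝ))⁻¹ := by positivity
    rw [integral_gaussian_eq v hv]
    have h1 : ∫ t : ℝ, gaussianPDFReal 0 v t * t ^ 2
        = (√(2 * π * v))⁻¹ * ∫ t : ℝ, t ^ 2 * rexp (-(2*(v:ℝ))⁻¹ * t ^ 2) := by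
      rw [← integral_const_mul]
      refine integral_congr_ae (Filter.Eventually.of_forall fun t => ?_)
      simp only [gaussianPDFReal_eq v]; ring
    rw [h1, integral_sq_exp_full hb]
    have h2 : ((2*(v:ℝ))⁻¹) ^ (-(3:ℝ)/2) = 2*(v:ℝ) * √(2*(v:ℝ)) := by
      rw [Real.inv_rpow hx.le, show (-(3:ℝ)/2) = -(3/2) by norm_num,
        Real.rpow_neg hx.le, inv_inv, show (3/2:ℝ) = 1 + 1/2 by norm_num,
        Real.rpow_add hx, Real.rpow_one, ← Real.sqrt_eq_rpow]
    have h3 : √(2*π*(v:ℝ)) = √π * √(2*(v:ℝ)) := by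
      rw [show 2*π*(v:ℝ) = π * (2*(v:ℝ)) by ring, Real.sqrt_mul pi_nonneg]
    rw [h2, h3]
    have hs : (0:ℝ) < √(2*(v:ℝ)) := Real.sqrt_pos.mpr hx
    have hp : (0:ℝ) < √π := Real.sqrt_pos.mpr pi_pos
    field_simp

lemma pi_prod_integrable {m : ℕ} (μ : Measure ℝ) [IsProbabilityMeasure μ]
    (f : Fin m → ℝ → ℝ) (hf : ∀ i, Integrable (f i) μ) :
    Integrable (fun w : Fin m → ℝ => ∏ i, f i (w i)) (Measure.pi fun _ => μ) := by
  letI : MeasureSpace ℝ := ⟨μ⟩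
  haveI : SigmaFinite (volume : Measure ℝ) := by
    show SigmaFinite μ; infer_instance
  exact Integrable.fintype_prod (E := ℝ) hf

lemma pi_prod_integral {m : ℕ} (μ : Measure ℝ) [IsProbabilityMeasure μ]
    (f : Fin m → ℝ → ℝ) :
    ∫ w, ∏ i, f i (w i) ∂(Measure.pi fun _ => μ) = ∏ i, ∫ t, f i t ∂μ := by
  letI : MeasureSpace ℝ := ⟨μ⟩
  haveI : SigmaFinite (volume : Measure ℝ) := by
    show SigmaFinite μ; infer_instance
  exact MeasureTheory.integral_fintype_prod_eq_prod f

section coords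
variable {m : ℕ} (v : ℝ≥0)

lemma integrable_ite_mul_ite (P Q : Prop) [Decidable P] [Decidable Q] :
    Integrable (fun t : ℝ => (if P then t else 1) * (if Q then t else 1))
      (gaussianReal 0 v) := by
  have hsq : Integrable (fun t : ℝ => t * t) (gaussianReal 0 v) := by
    simpa [sq] using integrable_sq_gaussian v
  by_cases hP : P <;> by_cases hQ : Q <;> simp only [hP, hQ, if_true, if_false,
    ite_true, ite_false, mul_one, one_mul]
  exacts [hsq, integrable_id_gaussian v, integrable_id_gaussian v, integrable_const 1]

lemma integrable_eval (j : Fin m) :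
    Integrable (fun w : Fin m → ℝ => w j)
      (Measure.pi fun _ : Fin m => gaussianReal 0 v) := by
  have h := pi_prod_integrable (gaussianReal 0 v)
    (fun l t => if l = j then t else 1) (fun l => by
      by_cases h : l = j <;> simp only [h, if_true, if_false, ite_true, ite_false]
      exacts [integrable_id_gaussian v, integrable_const 1])
  refine h.congr (Filter.Eventually.of_forall fun w => ?_)
  simp

lemma integral_eval (j : Fin m) :
    ∫ w, w j ∂(Measure.pi fun _ : Fin m => gaussianReal 0 v) = 0 := by
  have h : (fun w : Fin m → ℝ => w j)
      = fun w => ∏ l, (fun l t => if l = j then t else (1:ℝ)) l (w l) := by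
    funext w; simp
  rw [h, pi_prod_integral (gaussianReal 0 v) (fun l t => if l = j then t else (1:ℝ))]
  refine Finset.prod_eq_zero (Finset.mem_univ j) ?_
  simp [integral_id_gaussian]

lemma integrable_eval_mul (j k : Fin m) :
    Integrable (fun w : Fin m → ℝ => w j * w k)
      (Measure.pi fun _ : Fin m => gaussianReal 0 v) := by
  have h := pi_prod_integrable (gaussianReal 0 v)
    (fun l t => (if l = j then t else 1) * (if l = k then t else 1))
    (fun l => integrable_ite_mul_ite v _ _)
  refine h.congr (Filter.Eventually.of_forall fun w => ?_)
  beta_reduce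
  rw [Finset.prod_mul_distrib]
  simp

lemma integral_eval_mul (j k : Fin m) :
    ∫ w, w j * w k ∂(Measure.pi fun _ : Fin m => gaussianReal 0 v)
      = if j = k then (v:ℝ) else 0 := by
  by_cases hjk : j = k
  · subst hjk
    simp only [if_pos rfl]
    have h : (fun w : Fin m → ℝ => w j * w j)
        = fun w => ∏ l, (fun l t => if l = j then t ^ 2 else (1:ℝ)) l (w l) := by
      funext w; simp [sq]
    rw [h, pi_prod_integral (gaussianReal 0 v) (fun l t => if l = j then t ^ 2 else (1:ℝ))]
    rw [Finset.prod_eq_single j (fun l _ hl => by simp [if_neg hl, measure_univ])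
      (fun h => absurd (Finset.mem_univ j) h)]
    simp [integral_sq_gaussian]
  · simp only [if_neg hjk]
    have h : (fun w : Fin m → ℝ => w j * w k)
        = fun w => ∏ l, (fun l t =>
            (if l = j then t else 1) * (if l = k then t else (1:ℝ))) l (w l) := by
      funext w
      beta_reduce
      rw [Finset.prod_mul_distrib]
      simp
    rw [h, pi_prod_integral (gaussianReal 0 v)
      (fun l t => (if l = j then t else 1) * (if l = k then t else (1:ℝ)))]
    refine Finset.prod_eq_zero (Finset.mem_univ j) ?_
    have heq : ∫ t, (if j = j then t else 1) * (if j = k then t else (1:ℝ))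
        ∂(gaussianReal 0 v) = ∫ t, t ∂(gaussianReal 0 v) := by
      refine integral_congr_ae (Filter.Eventually.of_forall fun t => ?_)
      simp [if_pos rfl, if_neg hjk]
    beta_reduce
    rw [heq, integral_id_gaussian]

end coords


lemma euclid_norm_sq_eq {d : ℕ} (u : EuclideanSpace ℝ (Fin d)) :
    ‖u‖ ^ 2 = ∑ i, u i ^ 2 := by
  rw [EuclideanSpace.norm_eq, Real.sq_sqrt (by positivity)]
  simp [sq_abs]

/-- Corollary 3.4, one-step form: weak Lyapunov estimate for the
trapezoid scheme (`θ = 1/2`). -/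
theorem trapezoid_weak_lyapunov {d m : ℕ}
    (b : EuclideanSpace ℝ (Fin d) → EuclideanSpace ℝ (Fin d))
    (σ : EuclideanSpace ℝ (Fin d) → Matrix (Fin d) (Fin m) ℝ)
    (L₂ L₃ : ℝ) (hL₂ : 0 < L₂) (hL₃ : 0 < L₃)
    (hA2 : ∀ x : EuclideanSpace ℝ (Fin d),
      2 * ⟪b x, x⟫ + frobSq (σ x) ≤ L₂ - L₃ * ‖x‖ ^ 2)
    (τ : ℝ) (hτ : τ ∈ Set.Ioo (0 : ℝ) 1) (hb : Continuous b) (hσ : Continuous σ)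
    (x : EuclideanSpace ℝ (Fin d))
    (Y : (Fin m → ℝ) → EuclideanSpace ℝ (Fin d)) (hY : Measurable Y)
    (hfix : ∀ w : Fin m → ℝ,
      Y w = x + (τ / 2) • b x + (τ / 2) • b (Y w) + mulVecE (σ x) w) :
    ∫⁻ w, ENNReal.ofReal (Vhalf b τ (Y w)) ∂(gaussM m τ) ≤
      ENNReal.ofReal (Vhalf b τ x + L₂ * τ - L₃ * τ * ‖x‖ ^ 2) := by
  set v : ℝ≥0 := τ.toNNReal with hvdef
  have hvτ : (v : ℝ) = τ := Real.coe_toNNReal τ hτ.1.le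
  have hγ : gaussM m τ = Measure.pi fun _ : Fin m => ProbabilityTheory.gaussianReal 0 v := rfl
  set γ : Measure (Fin m → ℝ) :=
    Measure.pi fun _ : Fin m => ProbabilityTheory.gaussianReal 0 v with hγdef
  rw [hγ]
  set a : EuclideanSpace ℝ (Fin d) := x + (τ / 2) • b x with ha
  set S : Matrix (Fin d) (Fin m) ℝ := σ x with hS
  -- pointwise identity
  have key : ∀ w : Fin m → ℝ,
      Vhalf b τ (Y w) = ∑ i, (a i + ∑ j, S i j * w j) ^ 2 + 1 := by
    intro w
    have hz : Y w - (τ / 2) • b (Y w) = a + mulVecE S w := by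
      rw [sub_eq_iff_eq_add]
      conv_lhs => rw [hfix w]
      rw [ha]; abel
    have h1 : Vhalf b τ (Y w) = ‖a + mulVecE S w‖ ^ 2 + 1 := by rw [Vhalf, hz]
    rw [h1, euclid_norm_sq_eq]
    congr 1
  -- expansion
  set C0 : ℝ := (∑ i, a i ^ 2) + 1 with hC0
  set c1 : Fin m → ℝ := fun j => ∑ i, 2 * a i * S i j with hc1
  set c2 : Fin m → Fin m → ℝ := fun j k => ∑ i, S i j * S i k with hc2
  have hFexp : ∀ w : Fin m → ℝ,
      (∑ i, (a i + ∑ j, S i j * w j) ^ 2 + 1 : ℝ)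
        = C0 + (∑ j, c1 j * w j) + (∑ j, ∑ k, c2 j k * (w j * w k)) := by
    intro w
    have e1 : ∀ i : Fin d, (a i + ∑ j, S i j * w j) ^ 2
        = a i ^ 2 + (∑ j, 2 * a i * S i j * w j)
          + (∑ j, ∑ k, (S i j * S i k) * (w j * w k)) := by
      intro i
      rw [add_sq, sq (∑ j, S i j * w j), Finset.sum_mul_sum, Finset.mul_sum]
      have l1 : (∑ j, 2 * a i * (S i j * w j)) = ∑ j, 2 * a i * S i j * w j :=
        Finset.sum_congr rfl fun j _ => by ring
      have l2 : (∑ j, ∑ k, (S i j * w j) * (S i k * w k))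
          = ∑ j, ∑ k, (S i j * S i k) * (w j * w k) :=
        Finset.sum_congr rfl fun j _ => Finset.sum_congr rfl fun k _ => by ring
      rw [l1, l2]
    calc (∑ i, (a i + ∑ j, S i j * w j) ^ 2 + 1 : ℝ)
        = ((∑ i, a i ^ 2) + (∑ i, ∑ j, 2 * a i * S i j * w j)
            + (∑ i, ∑ j, ∑ k, (S i j * S i k) * (w j * w k))) + 1 := by
          rw [Finset.sum_congr rfl fun i _ => e1 i, Finset.sum_add_distrib,
            Finset.sum_add_distrib]
      _ = C0 + (∑ j, c1 j * w j) + (∑ j, ∑ k, c2 j k * (w j * w k)) := by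
          rw [hC0]
          have h2 : (∑ i, ∑ j, 2 * a i * S i j * w j) = ∑ j, c1 j * w j := by
            rw [Finset.sum_comm]
            exact Finset.sum_congr rfl fun j _ => by
              rw [hc1]; simp only [Finset.sum_mul]
          have h3 : (∑ i, ∑ j, ∑ k, (S i j * S i k) * (w j * w k))
              = ∑ j, ∑ k, c2 j k * (w j * w k) := by
            rw [Finset.sum_comm]
            refine Finset.sum_congr rfl fun j _ => ?_
            rw [Finset.sum_comm]
            refine Finset.sum_congr rfl fun k _ => ?_
            rw [hc2]; simp only [Finset.sum_mul]
          rw [h2, h3]; ring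
  -- integrability
  haveI : IsProbabilityMeasure γ := by rw [hγdef]; infer_instance
  have IB1s : Integrable (fun w : Fin m → ℝ => ∑ j, c1 j * w j) γ :=
    integrable_finset_sum _ fun j _ => (integrable_eval v j).const_mul _
  have IB2s : Integrable (fun w : Fin m → ℝ => ∑ j, ∑ k, c2 j k * (w j * w k)) γ :=
    integrable_finset_sum _ fun j _ =>
      integrable_finset_sum _ fun k _ => (integrable_eval_mul v j k).const_mul _
  have IC : Integrable (fun w : Fin m → ℝ => C0 + ∑ j, c1 j * w j) γ :=
    (integrable_const C0).add IB1s
  have IC2 : Integrable (fun w : Fin m → ℝ =>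
      (C0 + ∑ j, c1 j * w j) + ∑ j, ∑ k, c2 j k * (w j * w k)) γ := IC.add IB2s
  have Itot : Integrable (fun w : Fin m → ℝ =>
      ∑ i, (a i + ∑ j, S i j * w j) ^ 2 + 1) γ :=
    IC2.congr (Filter.Eventually.of_forall fun w => (hFexp w).symm)
  -- integral value
  have hint : ∫ w, (∑ i, (a i + ∑ j, S i j * w j) ^ 2 + 1) ∂γ
      = C0 + τ * frobSq S := by
    rw [integral_congr_ae (Filter.Eventually.of_forall hFexp)]
    rw [integral_add IC IB2s, integral_add (integrable_const C0) IB1s, integral_const]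
    have hA : ∫ w, (∑ j, c1 j * w j) ∂γ = 0 := by
      rw [integral_finset_sum _ fun j _ => (integrable_eval v j).const_mul _]
      refine Finset.sum_eq_zero fun j _ => ?_
      rw [integral_const_mul, _root_.integral_eval, mul_zero]
    have hB : ∫ w, (∑ j, ∑ k, c2 j k * (w j * w k)) ∂γ = τ * frobSq S := by
      rw [integral_finset_sum _ fun j _ =>
        integrable_finset_sum _ fun k _ => (integrable_eval_mul v j k).const_mul _]
      have h4 : ∀ j, ∫ w, (∑ k, c2 j k * (w j * w k)) ∂γ = c2 j j * τ := by
        intro j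
        rw [integral_finset_sum _ fun k _ => (integrable_eval_mul v j k).const_mul _]
        rw [Finset.sum_eq_single j (fun k _ hk => by
          rw [integral_const_mul, integral_eval_mul, if_neg (fun h => hk h.symm), mul_zero])
          (fun h => absurd (Finset.mem_univ j) h)]
        rw [integral_const_mul, integral_eval_mul, if_pos rfl, hvτ]
      rw [Finset.sum_congr rfl fun j _ => h4 j]
      rw [frobSq, Finset.sum_comm, Finset.mul_sum]
      refine Finset.sum_congr rfl fun j _ => ?_
      rw [hc2]
      rw [Finset.mul_sum, Finset.sum_mul]
      exact Finset.sum_congr rfl fun i _ => by rw [sq]; ring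
    rw [hA, hB]
    simp [measure_univ]
  -- real inequality
  have hreal : C0 + τ * frobSq S ≤ Vhalf b τ x + L₂ * τ - L₃ * τ * ‖x‖ ^ 2 := by
    have hnorm : (∑ i, a i ^ 2) = ‖x - (τ / 2) • b x‖ ^ 2 + 2 * τ * ⟪b x, x⟫ := by
      rw [← euclid_norm_sq_eq a, ha]
      have hp := norm_add_sq_real x ((τ / 2) • b x)
      have hm := norm_sub_sq_real x ((τ / 2) • b x)
      have hi : ⟪x, (τ / 2) • b x⟫ = (τ / 2) * ⟪b x, x⟫ := by
        rw [real_inner_smul_right, real_inner_comm]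
      rw [hp, hm, hi]; ring
    have hA2x := hA2 x
    have hmul := mul_le_mul_of_nonneg_left hA2x hτ.1.le
    rw [hC0, hnorm, Vhalf]
    nlinarith [hmul]
  -- conclude
  calc ∫⁻ w, ENNReal.ofReal (Vhalf b τ (Y w)) ∂γ
      = ∫⁻ w, ENNReal.ofReal (∑ i, (a i + ∑ j, S i j * w j) ^ 2 + 1) ∂γ := by
        exact lintegral_congr fun w => by rw [key w]
    _ = ENNReal.ofReal (∫ w, (∑ i, (a i + ∑ j, S i j * w j) ^ 2 + 1) ∂γ) := by
        rw [← MeasureTheory.ofReal_integral_eq_lintegral_ofReal Itot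
          (Filter.Eventually.of_forall fun w => by positivity)]
    _ ≤ ENNReal.ofReal (Vhalf b τ x + L₂ * τ - L₃ * τ * ‖x‖ ^ 2) := by
        rw [hint]; exact ENNReal.ofReal_le_ofReal hreal
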